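/- For every n ≥ 1, the element a^{2^n} belongs to Stab_G(3n) but not to Stab_G(3n+1); that is, a^{2^n} fixes every word of length 3n but moves some word of length 3n+1. -/

import Mathlib

namespace BVTree

/-- States of the automaton (generators, their inverses, and the identity). -/
inductive Q : Type
  | e | qa | qb | qc | qd | qa' | qb' | qc' | qd'
  deriving DecidableEq

open Q

/-- Output function of the automaton. -/
def Qout : Q → Bool → Bool
  | qa, x => !x
  | qa', x => !x
  | _, x => x

/-- Transition function of the automaton. -/
def Qtrans : Q → Bool → Q
  | qa, false => qd
  | qa, true => e
  | qb, false => qa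
  | qb, true => qc
  | qc, _ => qa
  | qd, false => e
  | qd, true => qb
  | qa', false => e
  | qa', true => qd'
  | qb', false => qa'
  | qb', true => qc'
  | qc', _ => qa'
  | qd', false => e
  | qd', true => qb'
  | e, _ => e

/-- The state corresponding to the inverse automorphism. -/
def Qinv : Q → Q
  | e => e
  | qa => qa' | qb => qb' | qc => qc' | qd => qd'
  | qa' => qa | qb' => qb | qc' => qc | qd' => qd

/-- The action of a state on finite binary words. -/
def act : Q → List Bool → List Bool
  | _, [] => []
  | q, x :: w => Qout q x :: act (Qtrans q x) w

lemma act_inv (q : Q) : ∀ w, act (Qinv q) (act q w) = w := by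
  intro w
  induction w generalizing q with
  | nil => rfl
  | cons x w ih =>
    have h1 : Qout (Qinv q) (Qout q x) = x := by cases q <;> cases x <;> rfl
    have h2 : Qtrans (Qinv q) (Qout q x) = Qinv (Qtrans q x) := by
      cases q <;> cases x <;> rfl
    simp [act, h1, h2, ih]

/-- The tree automorphism determined by a state of the automaton. -/
def aut (q : Q) : Equiv.Perm (List Bool) where
  toFun := act q
  invFun := act (Qinv q)
  left_inv := act_inv q
  right_inv := by
    intro w
    have h : Qinv (Qinv q) = q := by cases q <;> rfl
    simpa [h] using act_inv (Qinv q) w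

/-- The automorphism `a`: `a(0w) = 1·d(w)`, `a(1w) = 0·w`. -/
def a : Equiv.Perm (List Bool) := aut qa
/-- The automorphism `b`: `b(0w) = 0·a(w)`, `b(1w) = 1·c(w)`. -/
def b : Equiv.Perm (List Bool) := aut qb
/-- The automorphism `c`: `c(0w) = 0·a(w)`, `c(1w) = 1·a(w)`. -/
def c : Equiv.Perm (List Bool) := aut qc
/-- The automorphism `d`: `d(0w) = 0·w`, `d(1w) = 1·b(w)`. -/
def d : Equiv.Perm (List Bool) := aut qd

/-- The group `G` generated by `a`, `b`, `c`, `d`. -/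
def G : Subgroup (Equiv.Perm (List Bool)) := Subgroup.closure {a, b, c, d}


/-!
Writing automorphisms by their sections, `a² = (d, d)`, `d = (1, b)`, `b = (a, c)` and
`c = (a, a)`, all four fixing the first letter. Hence `a^(2k)` fixes every word of length `≤ 3`,
and below each vertex of length `3` its section is `1`, `c^k` (whose sections are `a^k`) or
`a^k`. So if `a^k` fixes the words of length `≤ m`, then `a^(2k)` fixes those of length `≤ m + 3`,
which gives the first claim by induction. Along the path `(010)^n` the section of `a^(2^n)` is
exactly `a`, which moves the next letter.
-/

lemma act_e (w : List Bool) : act e w = w := by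
  induction w with
  | nil => rfl
  | cons x w ih => simp [act, Qout, Qtrans, ih]

lemma aut_apply_nil (q : Q) : aut q [] = [] := rfl

lemma a_apply_false_cons (w : List Bool) : a (false :: w) = true :: d w := rfl

lemma a_apply_true_cons (w : List Bool) : a (true :: w) = false :: w :=
  congrArg (false :: ·) (act_e w)

lemma b_apply_false_cons (w : List Bool) : b (false :: w) = false :: a w := rfl

lemma b_apply_true_cons (w : List Bool) : b (true :: w) = true :: c w := rfl

lemma c_apply_cons (x : Bool) (w : List Bool) : c (x :: w) = x :: a w := by
  cases x <;> rfl

lemma d_apply_false_cons (w : List Bool) : d (false :: w) = false :: w :=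
  congrArg (false :: ·) (act_e w)

lemma d_apply_true_cons (w : List Bool) : d (true :: w) = true :: b w := rfl

lemma a_sq_apply_cons (x : Bool) (w : List Bool) : (a ^ 2) (x :: w) = x :: d w := by
  cases x <;> simp [sq, a_apply_false_cons, a_apply_true_cons]

lemma _root_.Equiv.Perm.pow_apply_cons_of_apply_cons {α : Type*} {g h : Equiv.Perm (List α)}
    {x : α} (hg : ∀ w, g (x :: w) = x :: h w) (k : ℕ) (w : List α) :
    (g ^ k) (x :: w) = x :: (h ^ k) w := by
  induction k generalizing w with
  | zero => rfl
  | succ k ih => simp only [pow_succ, Equiv.Perm.mul_apply, hg, ih]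

lemma aut_pow_apply_nil (q : Q) (k : ℕ) : (aut q ^ k) [] = [] :=
  Equiv.Perm.pow_apply_eq_self_of_apply_eq_self (aut_apply_nil q) k

lemma a_pow_apply_nil (k : ℕ) : (a ^ k) [] = [] := aut_pow_apply_nil qa k

lemma b_pow_apply_nil (k : ℕ) : (b ^ k) [] = [] := aut_pow_apply_nil qb k

lemma c_pow_apply_nil (k : ℕ) : (c ^ k) [] = [] := aut_pow_apply_nil qc k

lemma d_pow_apply_nil (k : ℕ) : (d ^ k) [] = [] := aut_pow_apply_nil qd k

lemma a_pow_two_mul_apply_cons (k : ℕ) (x : Bool) (w : List Bool) :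
    (a ^ (2 * k)) (x :: w) = x :: (d ^ k) w := by
  rw [pow_mul]
  exact Equiv.Perm.pow_apply_cons_of_apply_cons (a_sq_apply_cons x) k w

lemma d_pow_apply_false_cons (k : ℕ) (w : List Bool) : (d ^ k) (false :: w) = false :: w :=
  Equiv.Perm.pow_apply_eq_self_of_apply_eq_self (d_apply_false_cons w) k

lemma d_pow_apply_true_cons (k : ℕ) (w : List Bool) :
    (d ^ k) (true :: w) = true :: (b ^ k) w :=
  Equiv.Perm.pow_apply_cons_of_apply_cons d_apply_true_cons k w

lemma b_pow_apply_false_cons (k : ℕ) (w : List Bool) :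
    (b ^ k) (false :: w) = false :: (a ^ k) w :=
  Equiv.Perm.pow_apply_cons_of_apply_cons b_apply_false_cons k w

lemma b_pow_apply_true_cons (k : ℕ) (w : List Bool) :
    (b ^ k) (true :: w) = true :: (c ^ k) w :=
  Equiv.Perm.pow_apply_cons_of_apply_cons b_apply_true_cons k w

lemma c_pow_apply_cons (k : ℕ) (x : Bool) (w : List Bool) :
    (c ^ k) (x :: w) = x :: (a ^ k) w :=
  Equiv.Perm.pow_apply_cons_of_apply_cons (c_apply_cons x) k w

lemma a_pow_two_mul_apply_eq_self {k m : ℕ}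
    (h : ∀ w : List Bool, w.length ≤ m → (a ^ k) w = w) :
    ∀ v : List Bool, v.length ≤ m + 3 → (a ^ (2 * k)) v = v
  | [], _ => a_pow_apply_nil _
  | x :: w, hv => by
    rw [a_pow_two_mul_apply_cons]
    match w, hv with
    | [], _ => rw [d_pow_apply_nil]
    | false :: w, _ => rw [d_pow_apply_false_cons]
    | true :: [], _ => rw [d_pow_apply_true_cons, b_pow_apply_nil]
    | true :: false :: w, hv =>
      rw [d_pow_apply_true_cons, b_pow_apply_false_cons, h w (by simp at hv; omega)]
    | true :: true :: [], _ =>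
      rw [d_pow_apply_true_cons, b_pow_apply_true_cons, c_pow_apply_nil]
    | true :: true :: y :: w, hv =>
      rw [d_pow_apply_true_cons, b_pow_apply_true_cons, c_pow_apply_cons,
        h w (by simp at hv; omega)]

lemma a_pow_two_pow_apply_eq_self (n : ℕ) :
    ∀ v : List Bool, v.length ≤ 3 * n → (a ^ 2 ^ n) v = v := by
  induction n with
  | zero =>
    intro v hv
    rw [List.length_eq_zero_iff.mp (Nat.le_zero.mp hv)]
    exact a_pow_apply_nil _
  | succ n ih =>
    rw [pow_succ', mul_add_one]
    exact a_pow_two_mul_apply_eq_self ih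

def rep010 : ℕ → Bool → List Bool
  | 0, x => [x]
  | n + 1, x => false :: true :: false :: rep010 n x

lemma length_rep010 (n : ℕ) (x : Bool) : (rep010 n x).length = 3 * n + 1 := by
  induction n with
  | zero => rfl
  | succ n ih => simp only [rep010, List.length_cons, ih]; ring

lemma rep010_injective (n : ℕ) : Function.Injective (rep010 n) := by
  induction n with
  | zero => intro x y h; simpa [rep010] using h
  | succ n ih => intro x y h; exact ih (by simpa [rep010] using h)

lemma a_pow_two_pow_apply_rep010 (n : ℕ) : (a ^ 2 ^ n) (rep010 n false) = rep010 n true := by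
  induction n with
  | zero => rfl
  | succ n ih =>
    rw [pow_succ', rep010, rep010, a_pow_two_mul_apply_cons, d_pow_apply_true_cons,
      b_pow_apply_false_cons, ih]

theorem a_pow_level_stabilizer_general (n : ℕ) :
    (∀ v : List Bool, v.length = 3 * n → (a ^ (2 ^ n)) v = v) ∧
    (∃ v : List Bool, v.length = 3 * n + 1 ∧ (a ^ (2 ^ n)) v ≠ v) :=
  ⟨fun v hv => a_pow_two_pow_apply_eq_self n v hv.le,
    ⟨rep010 n false, length_rep010 n false, by
      rw [a_pow_two_pow_apply_rep010]
      exact (rep010_injective n).ne (by decide)⟩⟩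

/-- for `n ≥ 1`, `a^{2^n}` fixes level `3n` but moves some word of
length `3n+1`. -/
theorem a_pow_level_stabilizer (n : ℕ) (hn : 1 ≤ n) :
    (∀ v : List Bool, v.length = 3 * n → (a ^ (2 ^ n)) v = v) ∧
    (∃ v : List Bool, v.length = 3 * n + 1 ∧ (a ^ (2 ^ n)) v ≠ v) :=
  a_pow_level_stabilizer_general n

end BVTree
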